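/- For every Dyck path P, the contact vector of P equals the descent vector of the conjugate of P: C(P) = D(Conj(P)). -/

import Mathlib

/-- A step of a Dyck path: `u` (up) or `d` (down). -/
inductive Step where
  | u : Step
  | d : Step
deriving DecidableEq, Repr

open Step

/-- Number of up steps of a word. -/
def countU (w : List Step) : ℕ := w.count u

/-- Number of down steps of a word. -/
def countD (w : List Step) : ℕ := w.count d

/-- A word over {u,d} is a Dyck path if it has as many u's as d's and
every prefix has at least as many u's as d's. -/
def IsDyck (w : List Step) : Prop :=
  countU w = countD w ∧ ∀ p : List Step, p <+: w → countD p ≤ countU p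

/-- Number of occurrences of the two-letter factor `ab` in `w`. -/
def pairCount (a b : Step) (w : List Step) : ℕ := (w.zip w.tail).count (a, b)

/-- The conjugation relation on Dyck paths: `ConjRel P Q` holds iff `Q` is the
conjugate of `P`, following the recursive definition `Conj(∅) = ∅` and
`Conj(P1 u P2 d) = Conj(P2) u Conj(P1) d` over the unique last-arch
decomposition of non-empty Dyck paths. -/
inductive ConjRel : List Step → List Step → Prop
  | nil : ConjRel [] []
  | arch {P1 P2 Q1 Q2 : List Step} :
      IsDyck P1 → IsDyck P2 → ConjRel P1 Q1 → ConjRel P2 Q2 →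
      ConjRel (P1 ++ [Step.u] ++ P2 ++ [Step.d]) (Q2 ++ [Step.u] ++ Q1 ++ [Step.d])

/-- Number of non-empty prefixes of `w` that are Dyck paths
(equivalently, non-initial returns of the walk of `w` to its starting height,
before the walk ever goes below it). -/
noncomputable def dyckPrefixCount (w : List Step) : ℕ :=
  Nat.card {k : Fin w.length // IsDyck (w.take (k + 1))}

/-- Indices (0-based positions) of the up steps of `w`. -/
def upIndexes : List Step → List ℕ
  | [] => []
  | Step.u :: t => 0 :: (upIndexes t).map (· + 1)
  | _ :: t => (upIndexes t).map (· + 1)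

/-- The components of the contact vector of a Dyck path `w`:
`contact w 0` is the number of non-initial contacts of `w` with the `x`-axis,
and for `1 ≤ i`, `contact w i` is the number of non-initial returns to its
starting height of the maximal Dyck subpath following the `i`-th up step. -/
noncomputable def contact (w : List Step) : ℕ → ℕ
  | 0 => dyckPrefixCount w
  | i + 1 => dyckPrefixCount (w.drop ((upIndexes w).getD i 0 + 1))

/-- The contact vector `(c_0, ..., c_n)` of a Dyck path of size `n`. -/
noncomputable def contactVec (w : List Step) : List ℕ :=
  (List.range (countU w + 1)).map (contact w)

/-- The Dyck word `d^{d_n} u d^{d_{n-1}} u ... u d^{d_0}` encoded by a descent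
vector `(d_0, ..., d_n)` (given as the list `[d_0, ..., d_n]`). A Dyck path `Q`
has descent vector `v` (of length `n+1`) iff `wordOfDesc v = Q`. -/
def wordOfDesc : List ℕ → List Step
  | [] => []
  | [a] => List.replicate a Step.d
  | a :: rest => wordOfDesc rest ++ [Step.u] ++ List.replicate a Step.d

/-! Induct along the last-arch decomposition `P = P1 u P2 d`. A walk that has gone below its
starting height has no further Dyck prefixes, and the suffix following an up step of a Dyck path
does exactly that. So the subpath after an up step of `P1` (resp. `P2`) has the same returns in `P`
as in `P1` (resp. `P2`), the subpath after the middle `u` is `P2 d`, with the returns of `P2`, and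
`P` has the returns of `P1` plus its last step. Hence
`C(P) = (c₀(P1) + 1, c₁(P1), …, C(P2))`, and the word encoded by this concatenation is
`wordOfDesc (C P2) u wordOfDesc (C P1) d`, matching `Conj(P2) u Conj(P1) d`. -/

@[simp] lemma countU_nil : countU [] = 0 := rfl
@[simp] lemma countD_nil : countD [] = 0 := rfl
@[simp] lemma countU_cons_u (w : List Step) : countU (u :: w) = countU w + 1 := by simp [countU]
@[simp] lemma countU_cons_d (w : List Step) : countU (d :: w) = countU w := by simp [countU]
@[simp] lemma countD_cons_u (w : List Step) : countD (u :: w) = countD w := by simp [countD]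
@[simp] lemma countD_cons_d (w : List Step) : countD (d :: w) = countD w + 1 := by simp [countD]
@[simp] lemma countU_append (s t : List Step) : countU (s ++ t) = countU s + countU t :=
  List.count_append ..
@[simp] lemma countD_append (s t : List Step) : countD (s ++ t) = countD s + countD t :=
  List.count_append ..

lemma isDyck_iff_inits (w : List Step) :
    IsDyck w ↔ countU w = countD w ∧ ∀ p ∈ w.inits, countD p ≤ countU p := by
  simp only [IsDyck, List.mem_inits]

instance : DecidablePred IsDyck := fun w => decidable_of_iff _ (isDyck_iff_inits w).symm

lemma IsDyck.arch {P1 P2 : List Step} (h1 : IsDyck P1) (h2 : IsDyck P2) :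
    IsDyck (P1 ++ [u] ++ P2 ++ [d]) := by
  obtain ⟨e1, pre1⟩ := h1
  obtain ⟨e2, pre2⟩ := h2
  refine ⟨by simp [e1, e2], fun p hp => ?_⟩
  rw [← List.mem_inits] at hp
  simp only [List.append_assoc, List.cons_append, List.nil_append, List.inits_append, List.inits,
    List.map_cons, List.map_nil, List.tail_cons, List.map_append, List.map_map, List.mem_append,
    List.mem_inits, List.mem_map, Function.comp_apply, List.mem_cons, List.not_mem_nil,
    or_false] at hp
  rcases hp with hp | ⟨q, hq, rfl⟩ | rfl
  · exact pre1 p hp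
  · have hq_above := pre2 q hq
    simp only [countU_append, countU_cons_u, countD_append, countD_cons_u]
    omega
  · simp only [countU_append, countU_cons_u, countU_cons_d, countU_nil, countD_append,
      countD_cons_u, countD_cons_d, countD_nil]
    omega

lemma dyckPrefixCount_eq_countP (w : List Step) :
    dyckPrefixCount w = w.inits.tail.countP (IsDyck ·) := by
  have : w.inits.tail = (List.finRange w.length).map (fun k : Fin w.length => w.take (k + 1)) := by
    apply List.ext_getElem <;> simp
  rw [this, List.countP_map, dyckPrefixCount, Nat.card_eq_fintype_card, Fintype.card_subtype,
    Fin.univ_def, List.countP_eq_length_filter]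
  rfl

lemma dyckPrefixCount_append (s t : List Step) :
    dyckPrefixCount (s ++ t) = dyckPrefixCount s + t.inits.tail.countP (IsDyck <| s ++ ·) := by
  rw [dyckPrefixCount_eq_countP, dyckPrefixCount_eq_countP, List.inits_append,
    List.tail_append_of_ne_nil (by cases s <;> simp), List.countP_append, List.countP_map]
  rfl

lemma dyckPrefixCount_nil : dyckPrefixCount [] = 0 := by
  simp [dyckPrefixCount_eq_countP]

lemma dyckPrefixCount_append_singleton (s : List Step) (a : Step) :
    dyckPrefixCount (s ++ [a]) = dyckPrefixCount s + if IsDyck (s ++ [a]) then 1 else 0 := by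
  rw [dyckPrefixCount_append]
  simp [List.countP_cons]

lemma dyckPrefixCount_append_of_countU_lt {s : List Step} (hs : countU s < countD s)
    (t : List Step) : dyckPrefixCount (s ++ t) = dyckPrefixCount s := by
  rw [dyckPrefixCount_append, List.countP_eq_zero.mpr, add_zero]
  intro p _ hp
  have := (of_decide_eq_true hp).2 s (List.prefix_append s p)
  omega

lemma IsDyck.dyckPrefixCount_append_d {s : List Step} (hs : IsDyck s) :
    dyckPrefixCount (s ++ [d]) = dyckPrefixCount s := by
  rw [dyckPrefixCount_append_singleton, if_neg, add_zero]
  intro h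
  simpa [hs.1] using h.1

lemma dyckPrefixCount_arch {P1 P2 : List Step} (h1 : IsDyck P1) (h2 : IsDyck P2) :
    dyckPrefixCount (P1 ++ [u] ++ P2 ++ [d]) = dyckPrefixCount P1 + 1 := by
  have above : ∀ q ∈ P2.inits, ¬ IsDyck (P1 ++ u :: q) := by
    intro q hq h
    have balanced := h.1
    have hq_above := h2.2 q ((List.mem_inits _ _).mp hq)
    simp only [countU_append, countU_cons_u, countD_append, countD_cons_u, h1.1] at balanced
    omega
  rw [dyckPrefixCount_append_singleton, if_pos (h1.arch h2), List.append_assoc,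
    List.singleton_append, dyckPrefixCount_append, List.inits_cons, List.tail_cons,
    List.countP_map, List.countP_eq_zero.mpr (by simpa using above)]

def upSuffixes : List Step → List (List Step)
  | [] => []
  | u :: t => t :: upSuffixes t
  | d :: t => upSuffixes t

@[simp] lemma upSuffixes_nil : upSuffixes [] = [] := rfl
@[simp] lemma upSuffixes_cons_u (t : List Step) : upSuffixes (u :: t) = t :: upSuffixes t := rfl
@[simp] lemma upSuffixes_cons_d (t : List Step) : upSuffixes (d :: t) = upSuffixes t := rfl

lemma upSuffixes_eq_map_upIndexes (w : List Step) :
    upSuffixes w = (upIndexes w).map (fun i => w.drop (i + 1)) := by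
  induction w with
  | nil => rfl
  | cons a t ih => cases a <;> simp [upIndexes, ih]

lemma length_upIndexes (w : List Step) : (upIndexes w).length = countU w := by
  induction w with
  | nil => rfl
  | cons a t ih => cases a <;> simp [upIndexes, ih]

lemma contactVec_eq_cons (w : List Step) :
    contactVec w = dyckPrefixCount w :: (upSuffixes w).map dyckPrefixCount := by
  rw [contactVec, List.range_succ_eq_map, List.map_cons, List.map_map, upSuffixes_eq_map_upIndexes,
    List.map_map]
  refine congrArg _ (List.ext_getElem (by simp [length_upIndexes]) fun i _ hi => ?_)
  have hi' : i < (upIndexes w).length := by simpa using hi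
  simp [contact, List.getElem?_eq_getElem hi']

lemma upSuffixes_append (s t : List Step) :
    upSuffixes (s ++ t) = (upSuffixes s).map (· ++ t) ++ upSuffixes t := by
  induction s with
  | nil => rfl
  | cons a s ih => cases a <;> simp [ih]

lemma exists_eq_append_u_of_mem_upSuffixes {w s : List Step} (hs : s ∈ upSuffixes w) :
    ∃ p, w = p ++ u :: s := by
  induction w with
  | nil => simp at hs
  | cons a t ih =>
    cases a
    · rcases List.mem_cons.mp hs with rfl | hs
      · exact ⟨[], rfl⟩
      · obtain ⟨p, rfl⟩ := ih hs
        exact ⟨u :: p, rfl⟩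
    · obtain ⟨p, rfl⟩ := ih hs
      exact ⟨d :: p, rfl⟩

lemma IsDyck.countU_lt_countD_of_mem_upSuffixes {w s : List Step} (hw : IsDyck w)
    (hs : s ∈ upSuffixes w) : countU s < countD s := by
  obtain ⟨p, rfl⟩ := exists_eq_append_u_of_mem_upSuffixes hs
  have hp_above := hw.2 p (List.prefix_append p _)
  have balanced := hw.1
  simp only [countU_append, countU_cons_u, countD_append, countD_cons_u] at balanced
  omega

lemma contactVec_arch {P1 P2 : List Step} (h1 : IsDyck P1) (h2 : IsDyck P2) :
    contactVec (P1 ++ [u] ++ P2 ++ [d])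
      = ((dyckPrefixCount P1 + 1) :: (upSuffixes P1).map dyckPrefixCount) ++ contactVec P2 := by
  have left : ∀ s ∈ upSuffixes P1,
      dyckPrefixCount (s ++ u :: (P2 ++ [d])) = dyckPrefixCount s := fun s hs =>
    dyckPrefixCount_append_of_countU_lt (h1.countU_lt_countD_of_mem_upSuffixes hs) _
  have right : ∀ s ∈ upSuffixes P2, dyckPrefixCount (s ++ [d]) = dyckPrefixCount s := fun s hs =>
    dyckPrefixCount_append_of_countU_lt (h2.countU_lt_countD_of_mem_upSuffixes hs) _
  rw [contactVec_eq_cons, contactVec_eq_cons, dyckPrefixCount_arch h1 h2]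
  simp only [List.append_assoc, List.cons_append, List.nil_append, upSuffixes_append,
    upSuffixes_cons_u, upSuffixes_cons_d, upSuffixes_nil, List.append_nil, List.map_append,
    List.map_map, List.map_cons, h2.dyckPrefixCount_append_d, List.cons.injEq, true_and]
  exact congrArg₂ (· ++ ·) (List.map_congr_left left) (congrArg _ (List.map_congr_left right))

lemma wordOfDesc_cons_append_cons (a b : ℕ) (L M : List ℕ) :
    wordOfDesc (a :: L ++ b :: M) = wordOfDesc (b :: M) ++ [u] ++ wordOfDesc (a :: L) := by
  induction L generalizing a with
  | nil => rfl
  | cons c L ih =>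
    change wordOfDesc (c :: L ++ b :: M) ++ [u] ++ List.replicate a d = _
    rw [ih]
    simp [wordOfDesc]

lemma wordOfDesc_succ_cons (a : ℕ) (L : List ℕ) :
    wordOfDesc ((a + 1) :: L) = wordOfDesc (a :: L) ++ [d] := by
  cases L <;> simp [wordOfDesc, List.replicate_succ']

theorem contactVec_eq_descVec_conj_general (P Q : List Step)
    (hconj : ConjRel P Q) :
    wordOfDesc (contactVec P) = Q := by
  induction hconj with
  | nil => rw [contactVec_eq_cons, dyckPrefixCount_nil]; rfl
  | @arch P1 P2 _ _ h1 h2 _ _ ih1 ih2 =>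
    rw [contactVec_arch h1 h2, contactVec_eq_cons P2,
      wordOfDesc_cons_append_cons, wordOfDesc_succ_cons, ← contactVec_eq_cons,
      ← contactVec_eq_cons, ih1, ih2, ← List.append_assoc]

/-- For every Dyck path `P`, the contact vector of `P` equals the
descent vector of its conjugate: `C(P) = D(Conj(P))`, i.e. the word encoded by
the contact vector of `P` (as a descent vector) is exactly `Conj(P)`. -/
theorem contactVec_eq_descVec_conj (P Q : List Step)
    (hP : IsDyck P) (hconj : ConjRel P Q) :
    wordOfDesc (contactVec P) = Q :=
  contactVec_eq_descVec_conj_general P Q hconj
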